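/- arXiv:2411.00915 — 5 statements merged into one kernel-verified Lean document; each statement's English description precedes it below -/
import Mathlib

section
/- Fix α ∈ (0,1) and B > 0. Let U₁, U₂ : (0,B) → ℝ be positive functions each satisfying (y/x)^α ≤ Uᵢ(y)/Uᵢ(x) ≤ y/x for all 0 < x ≤ y < B. Suppose (r₁*, r₂*) with r₁* + r₂* = B, r₁*, r₂* > 0 satisfies U₁(r₁*) = U₂(r₂*). Define sequences by the update r_i^{t+1} = (w_i^t / (w₁^t + w₂^t))·B where w_i^t = r_i^t / U_i(r_i^t), starting from any r₁⁰, r₂⁰ > 0 with r₁⁰ + r₂⁰ = B. Let X^t = (r₁*/r₁^t)·(r₂^t/r₂*). Then for all t ≥ 0, if X^t ≥ 1 then 1 ≤ X^{t+1} ≤ (X^t)^{1−α}. -/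
open Set

set_option maxHeartbeats 1000000 in
theorem contraction_step
    (α B : ℝ) (hα : α ∈ Ioo (0:ℝ) 1) (hB : 0 < B)
    (U₁ U₂ : ℝ → ℝ)
    (hU₁pos : ∀ r ∈ Ioo (0:ℝ) B, 0 < U₁ r)
    (hU₂pos : ∀ r ∈ Ioo (0:ℝ) B, 0 < U₂ r)
    (hU₁ratio : ∀ x y : ℝ, 0 < x → x ≤ y → y < B →
      (y / x) ^ α ≤ U₁ y / U₁ x ∧ U₁ y / U₁ x ≤ y / x)
    (hU₂ratio : ∀ x y : ℝ, 0 < x → x ≤ y → y < B →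
      (y / x) ^ α ≤ U₂ y / U₂ x ∧ U₂ y / U₂ x ≤ y / x)
    (r₁s r₂s : ℝ) (hr₁s : 0 < r₁s) (hr₂s : 0 < r₂s) (hsums : r₁s + r₂s = B)
    (heq : U₁ r₁s = U₂ r₂s)
    (r₁ r₂ : ℕ → ℝ)
    (hpos₁ : ∀ t, 0 < r₁ t) (hpos₂ : ∀ t, 0 < r₂ t)
    (hsum : ∀ t, r₁ t + r₂ t = B)
    (hupd₁ : ∀ t, r₁ (t + 1) =
      (r₁ t / U₁ (r₁ t)) * B / (r₁ t / U₁ (r₁ t) + r₂ t / U₂ (r₂ t)))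
    (hupd₂ : ∀ t, r₂ (t + 1) =
      (r₂ t / U₂ (r₂ t)) * B / (r₁ t / U₁ (r₁ t) + r₂ t / U₂ (r₂ t)))
    (X : ℕ → ℝ) (hX : ∀ t, X t = (r₁s / r₁ t) * (r₂ t / r₂s)) :
    ∀ t, 1 ≤ X t → 1 ≤ X (t + 1) ∧ X (t + 1) ≤ X t ^ (1 - α) := by
  intro t hXt
  obtain ⟨hα0, hα1⟩ := hα
  have ha : 0 < r₁ t := hpos₁ t
  have hb : 0 < r₂ t := hpos₂ t
  have hab : r₁ t + r₂ t = B := hsum t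
  have haB : r₁ t < B := by linarith
  have hbB : r₂ t < B := by linarith
  have hr₁sB : r₁s < B := by linarith
  have hr₂sB : r₂s < B := by linarith
  have hU1a : 0 < U₁ (r₁ t) := hU₁pos _ ⟨ha, haB⟩
  have hU2b : 0 < U₂ (r₂ t) := hU₂pos _ ⟨hb, hbB⟩
  have hU1s : 0 < U₁ r₁s := hU₁pos _ ⟨hr₁s, hr₁sB⟩
  have hU2s : 0 < U₂ r₂s := hU₂pos _ ⟨hr₂s, hr₂sB⟩
  have hXeq : X t = (r₁s / r₁ t) * (r₂ t / r₂s) := hX t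
  have hcross : r₁ t * r₂s ≤ r₁s * r₂ t := by
    have h := hXt
    rw [hXeq, div_mul_div_comm, le_div_iff₀ (by positivity)] at h
    linarith
  have ha_le : r₁ t ≤ r₁s := by nlinarith
  have hb_ge : r₂s ≤ r₂ t := by linarith
  obtain ⟨h1l, h1u⟩ := hU₁ratio (r₁ t) r₁s ha ha_le hr₁sB
  obtain ⟨h2l, h2u⟩ := hU₂ratio r₂s (r₂ t) hr₂s hb_ge hbB
  have hwpos : 0 < r₁ t / U₁ (r₁ t) + r₂ t / U₂ (r₂ t) := by positivity
  have hXt1 : X (t+1) = X t * (U₁ (r₁ t) / U₂ (r₂ t)) := by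
    rw [hX (t+1), hupd₁ t, hupd₂ t, hXeq]
    field_simp
  set c := U₁ r₁s with hc
  -- cross-multiplied versions
  have h1u' : c * r₁ t ≤ r₁s * U₁ (r₁ t) := by
    rw [div_le_div_iff₀ hU1a ha] at h1u; linarith
  have h2u' : U₂ (r₂ t) * r₂s ≤ r₂ t * c := by
    rw [← heq, div_le_div_iff₀ hU1s hr₂s] at h2u; linarith
  set P := (r₁s / r₁ t) ^ α with hP
  set Q := (r₂ t / r₂s) ^ α with hQ
  have hPpos : 0 < P := Real.rpow_pos_of_pos (by positivity) α
  have hQpos : 0 < Q := Real.rpow_pos_of_pos (by positivity) α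
  have h1l' : P * U₁ (r₁ t) ≤ c := by
    rw [le_div_iff₀ hU1a] at h1l; linarith
  have h2l' : c * Q ≤ U₂ (r₂ t) := by
    rw [← heq, le_div_iff₀ hU1s] at h2l; linarith
  clear_value c P Q
  have hXpos : 0 < X t := lt_of_lt_of_le one_pos hXt
  constructor
  · rw [hXt1, hXeq]
    rw [div_mul_div_comm]
    rw [div_mul_div_comm, le_div_iff₀ (by positivity)]
    nlinarith [mul_le_mul h1u' h2u' (mul_nonneg hU2b.le hr₂s.le) (mul_nonneg hr₁s.le hU1a.le), hU1s, hU1a, hU2b]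
  · have hXα : X t ^ α = P * Q := by
      rw [hXeq, hP, hQ, ← Real.mul_rpow (by positivity) (by positivity)]
    have key : X (t+1) * (X t ^ α) ≤ X t := by
      rw [hXt1, hXα]
      have huv : U₁ (r₁ t) / U₂ (r₂ t) * (P * Q) ≤ 1 := by
        rw [div_mul_eq_mul_div, div_le_one hU2b]
        nlinarith [mul_le_mul h1l' h2l' (mul_nonneg hU1s.le hQpos.le) hU1s.le, hU1s, mul_pos hPpos hQpos, hU1a, hU2b]
      calc X t * (U₁ (r₁ t) / U₂ (r₂ t)) * (P * Q)
          = X t * (U₁ (r₁ t) / U₂ (r₂ t) * (P * Q)) := by ring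
        _ ≤ X t * 1 := by
            exact mul_le_mul_of_nonneg_left huv (le_of_lt hXpos)
        _ = X t := mul_one _
    have hpow : X t ^ (1 - α) = X t / X t ^ α := by
      rw [sub_eq_add_neg, Real.rpow_add hXpos, Real.rpow_one, Real.rpow_neg (le_of_lt hXpos),
        div_eq_mul_inv]
    rw [hpow, le_div_iff₀ (Real.rpow_pos_of_pos hXpos α)]
    exact key
end

section
/- Under the hypotheses of the two-client weighted allocation scheme with α ∈ (0,1) and X⁰ = (r₁*/r₁⁰)·(r₂⁰/r₂*) ≥ 1, the quantity X^t satisfies 1 ≤ X^t ≤ (X⁰)^{(1−α)^t} for all t, and hence X^t → 1 as t → ∞. -/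
open Set Filter

lemma geometric_convergence_aux (Xt a b c α p q : ℝ)
    (hXt : 1 ≤ Xt) (ha : 0 < a) (hb : 0 < b) (hc : 0 < c)
    (hα0 : 0 < α) (hα1 : α < 1)
    (hp : 0 < p) (hq : 0 < q) (hXeq : Xt = p * q)
    (hA1 : p ^ α ≤ c / a) (hA2 : c / a ≤ p)
    (hB1 : q ^ α ≤ b / c) (hB2 : b / c ≤ q) :
    1 ≤ Xt * (a / b) ∧ Xt * (a / b) ≤ Xt ^ (1 - α) := by
  have hXtpos : 0 < Xt := lt_of_lt_of_le one_pos hXt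
  have hba_eq : b / a = (c / a) * (b / c) := by field_simp
  have hba_ub : b / a ≤ Xt := by
    rw [hba_eq, hXeq]
    exact mul_le_mul hA2 hB2 (by positivity) (le_of_lt hp)
  have hba_lb : Xt ^ α ≤ b / a := by
    rw [hba_eq, hXeq, Real.mul_rpow (le_of_lt hp) (le_of_lt hq)]
    exact mul_le_mul hA1 hB1 (by positivity) (by positivity)
  constructor
  · have hble : b ≤ Xt * a := (div_le_iff₀ ha).mp hba_ub
    have heq2 : Xt * (a / b) = Xt * a / b := by ring
    rw [heq2, one_le_div hb]
    exact hble
  · have hpow : 0 < Xt ^ α := Real.rpow_pos_of_pos hXtpos α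
    have hab : a / b ≤ (Xt ^ α)⁻¹ := by
      have : a / b = (b / a)⁻¹ := by rw [inv_div]
      rw [this]
      exact inv_anti₀ hpow hba_lb
    calc Xt * (a / b) ≤ Xt * (Xt ^ α)⁻¹ :=
          mul_le_mul_of_nonneg_left hab (le_of_lt hXtpos)
      _ = Xt ^ (1 - α) := by
          rw [Real.rpow_sub hXtpos, Real.rpow_one, div_eq_mul_inv]

theorem geometric_convergence
    (α B : ℝ) (hα : α ∈ Ioo (0:ℝ) 1) (hB : 0 < B)
    (U₁ U₂ : ℝ → ℝ)
    (hU₁pos : ∀ r ∈ Ioo (0:ℝ) B, 0 < U₁ r)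
    (hU₂pos : ∀ r ∈ Ioo (0:ℝ) B, 0 < U₂ r)
    (hU₁ratio : ∀ x y : ℝ, 0 < x → x ≤ y → y < B →
      (y / x) ^ α ≤ U₁ y / U₁ x ∧ U₁ y / U₁ x ≤ y / x)
    (hU₂ratio : ∀ x y : ℝ, 0 < x → x ≤ y → y < B →
      (y / x) ^ α ≤ U₂ y / U₂ x ∧ U₂ y / U₂ x ≤ y / x)
    (r₁s r₂s : ℝ) (hr₁s : 0 < r₁s) (hr₂s : 0 < r₂s) (hsums : r₁s + r₂s = B)
    (heq : U₁ r₁s = U₂ r₂s)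
    (r₁ r₂ : ℕ → ℝ)
    (hpos₁ : ∀ t, 0 < r₁ t) (hpos₂ : ∀ t, 0 < r₂ t)
    (hsum : ∀ t, r₁ t + r₂ t = B)
    (hupd₁ : ∀ t, r₁ (t + 1) =
      (r₁ t / U₁ (r₁ t)) * B / (r₁ t / U₁ (r₁ t) + r₂ t / U₂ (r₂ t)))
    (hupd₂ : ∀ t, r₂ (t + 1) =
      (r₂ t / U₂ (r₂ t)) * B / (r₁ t / U₁ (r₁ t) + r₂ t / U₂ (r₂ t)))
    (X : ℕ → ℝ) (hX : ∀ t, X t = (r₁s / r₁ t) * (r₂ t / r₂s))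
    (hX0 : 1 ≤ X 0) :
    (∀ t, 1 ≤ X t ∧ X t ≤ X 0 ^ ((1 - α) ^ t)) ∧
      Tendsto X atTop (nhds 1) := by
  obtain ⟨hα0, hα1⟩ := hα
  have hr1B : ∀ t, r₁ t < B := fun t => by have := hpos₂ t; linarith [hsum t]
  have hr2B : ∀ t, r₂ t < B := fun t => by have := hpos₁ t; linarith [hsum t]
  have hr1sB : r₁s < B := by linarith
  have hr2sB : r₂s < B := by linarith
  have hU1t : ∀ t, 0 < U₁ (r₁ t) := fun t => hU₁pos _ ⟨hpos₁ t, hr1B t⟩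
  have hU2t : ∀ t, 0 < U₂ (r₂ t) := fun t => hU₂pos _ ⟨hpos₂ t, hr2B t⟩
  have hU1s : 0 < U₁ r₁s := hU₁pos _ ⟨hr₁s, hr1sB⟩
  have hU2s : 0 < U₂ r₂s := hU₂pos _ ⟨hr₂s, hr2sB⟩
  have step : ∀ t, 1 ≤ X t → 1 ≤ X (t + 1) ∧ X (t + 1) ≤ X t ^ (1 - α) := by
    intro t ht
    have hp1 := hpos₁ t
    have hp2 := hpos₂ t
    have hU1 := hU1t t
    have hU2 := hU2t t
    have hXt_pos : 0 < X t := lt_of_lt_of_le one_pos ht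
    have hkey : r₁ t * r₂s ≤ r₁s * r₂ t := by
      have h1 := ht
      rw [hX t, div_mul_div_comm, le_div_iff₀ (by positivity)] at h1
      linarith
    have h1le : r₁ t ≤ r₁s := by nlinarith [hsum t, hsums]
    have h2le : r₂s ≤ r₂ t := by nlinarith [hsum t, hsums]
    obtain ⟨hA1, hA2⟩ := hU₁ratio (r₁ t) r₁s hp1 h1le hr1sB
    obtain ⟨hB1, hB2⟩ := hU₂ratio r₂s (r₂ t) hr₂s h2le (hr2B t)
    rw [heq] at hA1 hA2
    -- X (t+1) = X t * (U₁ (r₁ t) / U₂ (r₂ t))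
    have hS : r₁ t / U₁ (r₁ t) + r₂ t / U₂ (r₂ t) ≠ 0 := ne_of_gt (by positivity)
    have hXnext : X (t + 1) = X t * (U₁ (r₁ t) / U₂ (r₂ t)) := by
      rw [hX (t + 1), hX t, hupd₁ t, hupd₂ t]
      field_simp
    rw [hXnext]
    exact geometric_convergence_aux (X t) (U₁ (r₁ t)) (U₂ (r₂ t)) (U₂ r₂s) α
      (r₁s / r₁ t) (r₂ t / r₂s) ht hU1 hU2 hU2s hα0 hα1
      (by positivity) (by positivity) (hX t) hA1 hA2 hB1 hB2
  have hX0pos : (0:ℝ) < X 0 := lt_of_lt_of_le one_pos hX0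
  have main : ∀ t, 1 ≤ X t ∧ X t ≤ X 0 ^ ((1 - α) ^ t) := by
    intro t
    induction t with
    | zero => exact ⟨hX0, by simp⟩
    | succ n ih =>
      obtain ⟨ih1, ih2⟩ := ih
      obtain ⟨s1, s2⟩ := step n ih1
      refine ⟨s1, ?_⟩
      calc X (n + 1) ≤ X n ^ (1 - α) := s2
        _ ≤ (X 0 ^ ((1 - α) ^ n)) ^ (1 - α) :=
            Real.rpow_le_rpow (by linarith) ih2 (by linarith)
        _ = X 0 ^ ((1 - α) ^ (n + 1)) := by
            rw [← Real.rpow_mul (le_of_lt hX0pos)]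
            rw [← pow_succ]
  refine ⟨main, ?_⟩
  have hexp : Tendsto (fun t : ℕ => (1 - α) ^ t) atTop (nhds 0) :=
    tendsto_pow_atTop_nhds_zero_of_lt_one (by linarith) (by linarith)
  have hup : Tendsto (fun t : ℕ => X 0 ^ ((1 - α) ^ t)) atTop (nhds 1) := by
    have := (tendsto_const_nhds : Tendsto (fun _ : ℕ => X 0) atTop (nhds (X 0))).rpow
      hexp (Or.inl hX0pos.ne')
    simpa using this
  exact tendsto_of_tendsto_of_tendsto_of_le_of_le tendsto_const_nhds hup
    (fun t => (main t).1) (fun t => (main t).2)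
end

section
/- Let n ≥ 2 and let U₁, …, U_n : [0,B] → ℝ be continuous, strictly increasing with U_i(0) = 0. An allocation (r₁*, …, r_n*) with Σ r_i* = B and all r_i* > 0 such that U₁(r₁*) = ⋯ = U_n(r_n*) is the unique maximizer of min_i U_i(r_i) over all nonnegative allocations (r₁, …, r_n) with Σ r_i = B. -/
open Set

theorem equalizing_allocation_maximizes_min
    (n : ℕ) (hn : 2 ≤ n) (B : ℝ) (hB : 0 < B)
    (U : Fin n → ℝ → ℝ)
    (hc : ∀ i, ContinuousOn (U i) (Icc 0 B))
    (hm : ∀ i, StrictMonoOn (U i) (Icc 0 B))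
    (h0 : ∀ i, U i 0 = 0)
    (rs : Fin n → ℝ) (hrs : ∀ i, 0 < rs i) (hsums : ∑ i, rs i = B)
    (heq : ∀ i j, U i (rs i) = U j (rs j)) :
    ∀ r : Fin n → ℝ, (∀ i, 0 ≤ r i) → ∑ i, r i = B →
      (⨅ i, U i (r i)) ≤ ⨅ i, U i (rs i) ∧
        ((⨅ i, U i (r i)) = ⨅ i, U i (rs i) → r = rs) := by
  intro r hr hsum
  haveI : Nonempty (Fin n) := ⟨⟨0, by omega⟩⟩
  have hrsmem : ∀ i, rs i ∈ Icc (0:ℝ) B := by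
    intro i
    refine ⟨(hrs i).le, ?_⟩
    calc rs i ≤ ∑ j, rs j :=
      Finset.single_le_sum (fun j _ => (hrs j).le) (Finset.mem_univ i)
    _ = B := hsums
  have hrmem : ∀ i, r i ∈ Icc (0:ℝ) B := by
    intro i
    refine ⟨hr i, ?_⟩
    calc r i ≤ ∑ j, r j :=
      Finset.single_le_sum (fun j _ => hr j) (Finset.mem_univ i)
    _ = B := hsum
  -- key strict lemma: if r i < rs i for some i, then inf < inf
  have key : ∀ i, r i < rs i → (⨅ j, U j (r j)) < ⨅ j, U j (rs j) := by
    intro i hi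
    have h1 : (⨅ j, U j (r j)) ≤ U i (r i) :=
      ciInf_le (Finite.bddBelow_range _) i
    have h2 : U i (r i) < U i (rs i) := hm i (hrmem i) (hrsmem i) hi
    have h3 : U i (rs i) ≤ ⨅ j, U j (rs j) := by
      apply le_ciInf
      intro j
      exact le_of_eq (heq i j)
    linarith
  by_cases hcase : r = rs
  · subst hcase
    exact ⟨le_rfl, fun _ => rfl⟩
  · -- there is i with r i < rs i
    have hex : ∃ i, r i < rs i := by
      by_contra h
      push_neg at h
      have hne : ∃ i, r i ≠ rs i := by
        by_contra h'
        push_neg at h'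
        exact hcase (funext h')
      obtain ⟨i, hi⟩ := hne
      have : ∑ j, rs j < ∑ j, r j :=
        Finset.sum_lt_sum (fun j _ => h j) ⟨i, Finset.mem_univ i,
          lt_of_le_of_ne (h i) (Ne.symm hi)⟩
      rw [hsums, hsum] at this
      exact lt_irrefl B this
    obtain ⟨i, hi⟩ := hex
    have hlt := key i hi
    exact ⟨hlt.le, fun h => absurd h hlt.ne⟩
end

section
/- Let U₁, U₂ be continuous positive functions on (0,B) satisfying (y/x)^α ≤ U_i(y)/U_i(x) ≤ y/x for 0 < x ≤ y < B with α ∈ (0,1), and let (r₁*, r₂*) be an interior allocation with r₁* + r₂* = B and U₁(r₁*) = U₂(r₂*). Then for the iteration r_i^{t+1} = (r_i^t/U_i(r_i^t))·B / Σ_j (r_j^t/U_j(r_j^t)) started at any interior allocation, r₁^t → r₁* and r₂^t → r₂*. -/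
open Set Filter Topology

/-!
The share ratio `q = r₁ / r₂` evolves by `q ↦ q * (U₂ r₂ / U₁ r₁)`. Starting below the equalizing
allocation, `U₁ r₁ ≤ U₂ r₂`, so `q` increases; it never overshoots `r₁s / r₂s`, because the new
ratio is `(r₁ / U₁ r₁) / (r₂ / U₂ r₂)` and `r ↦ r / U r` is monotone. If `r₁` stayed below some
`L < r₁s`, the factor `U₂ r₂ / U₁ r₁` would stay above `U₂ (B - L) / U₁ L > 1` and the bounded
ratio `q` would grow geometrically. Starting above is the same situation with the clients swapped.
-/

structure IsAdmissibleUtility (B : ℝ) (U : ℝ → ℝ) : Prop where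
  pos : ∀ r ∈ Ioo 0 B, 0 < U r
  strictMonoOn : StrictMonoOn U (Ioo 0 B)
  monotoneOn_div : MonotoneOn (fun r => r / U r) (Ioo 0 B)

theorem IsAdmissibleUtility.of_rpow_le_div_le {α B : ℝ} {U : ℝ → ℝ} (hα : 0 < α)
    (hpos : ∀ r ∈ Ioo 0 B, 0 < U r)
    (hratio : ∀ x y : ℝ, 0 < x → x ≤ y → y < B →
      (y / x) ^ α ≤ U y / U x ∧ U y / U x ≤ y / x) :
    IsAdmissibleUtility B U where
  pos := hpos
  strictMonoOn x hx y hy hxy := by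
    have h : 1 < U y / U x :=
      (Real.one_lt_rpow ((one_lt_div hx.1).2 hxy) hα).trans_le (hratio x y hx.1 hxy.le hy.2).1
    exact (one_lt_div (hpos x hx)).1 h
  monotoneOn_div x hx y hy hxy := by
    have h := (hratio x y hx.1 hxy hy.2).2
    rw [div_le_div_iff₀ (hpos x hx) hx.1] at h
    rw [div_le_div_iff₀ (hpos x hx) (hpos y hy)]
    linarith

theorem div_le_div_iff_le_of_add_eq {a b c d : ℝ} (ha : 0 < a) (hb : 0 < b) (hd : 0 < d)
    (h : a + b = c + d) : a / b ≤ c / d ↔ a ≤ c := by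
  rw [div_le_div_iff₀ hb hd]
  constructor <;> intro <;> nlinarith

theorem mem_Ioo_of_add_eq {a b c : ℝ} (ha : 0 < a) (hb : 0 < b) (h : a + b = c) :
    a ∈ Ioo 0 c :=
  ⟨ha, by linarith⟩

theorem not_bddAbove_range_of_mul_le {q : ℕ → ℝ} {c : ℝ} (h₀ : 0 < q 0) (hc : 1 < c)
    (hq : ∀ t, q t * c ≤ q (t + 1)) : ¬BddAbove (range q) := by
  have hgeom t : c ^ t * q 0 ≤ q t := by
    induction t with
    | zero => simp
    | succ t ih =>
      calc c ^ (t + 1) * q 0 = c ^ t * q 0 * c := by ring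
        _ ≤ q t * c := by gcongr
        _ ≤ q (t + 1) := hq t
  exact not_bddAbove_of_tendsto_atTop <|
    tendsto_atTop_mono hgeom ((tendsto_pow_atTop_atTop_of_one_lt hc).atTop_mul_const h₀)

theorem Filter.Tendsto.of_add_eq {ι G : Type*} [AddCommGroup G] [TopologicalSpace G]
    [IsTopologicalAddGroup G] {l : Filter ι} {f g : ι → G} {a b c : G}
    (hfg : ∀ i, f i + g i = c) (hab : a + b = c) (hf : Tendsto f l (𝓝 a)) :
    Tendsto g l (𝓝 b) := by
  have hg : g = fun i => c - f i := funext fun i => eq_sub_of_add_eq' (hfg i)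
  rw [hg, eq_sub_of_add_eq' hab]
  exact tendsto_const_nhds.sub hf

structure IsEqualizingAllocation (B : ℝ) (U₁ U₂ : ℝ → ℝ) (r₁ r₂ : ℝ) : Prop where
  pos₁ : 0 < r₁
  pos₂ : 0 < r₂
  add_eq : r₁ + r₂ = B
  utility_eq : U₁ r₁ = U₂ r₂

namespace IsEqualizingAllocation

variable {B r₁ r₂ : ℝ} {U₁ U₂ : ℝ → ℝ}

theorem swap (h : IsEqualizingAllocation B U₁ U₂ r₁ r₂) :
    IsEqualizingAllocation B U₂ U₁ r₂ r₁ :=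
  ⟨h.pos₂, h.pos₁, by rw [add_comm, h.add_eq], h.utility_eq.symm⟩

theorem mem_Ioo₁ (h : IsEqualizingAllocation B U₁ U₂ r₁ r₂) : r₁ ∈ Ioo 0 B :=
  mem_Ioo_of_add_eq h.pos₁ h.pos₂ h.add_eq

theorem mem_Ioo₂ (h : IsEqualizingAllocation B U₁ U₂ r₁ r₂) : r₂ ∈ Ioo 0 B :=
  h.swap.mem_Ioo₁

end IsEqualizingAllocation

structure IsReallocation (B : ℝ) (U₁ U₂ : ℝ → ℝ) (r₁ r₂ : ℕ → ℝ) : Prop where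
  pos₁ : ∀ t, 0 < r₁ t
  pos₂ : ∀ t, 0 < r₂ t
  add_eq : ∀ t, r₁ t + r₂ t = B
  div_succ : ∀ t, r₁ (t + 1) / r₂ (t + 1) = (r₁ t / U₁ (r₁ t)) / (r₂ t / U₂ (r₂ t))

namespace IsReallocation

variable {B r₁s r₂s : ℝ} {U₁ U₂ : ℝ → ℝ} {r₁ r₂ : ℕ → ℝ}

theorem swap (h : IsReallocation B U₁ U₂ r₁ r₂) : IsReallocation B U₂ U₁ r₂ r₁ :=
  ⟨h.pos₂, h.pos₁, fun t => by rw [add_comm, h.add_eq],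
    fun t => by rw [← inv_div, h.div_succ, inv_div]⟩

theorem mem_Ioo₁ (h : IsReallocation B U₁ U₂ r₁ r₂) (t : ℕ) : r₁ t ∈ Ioo 0 B :=
  mem_Ioo_of_add_eq (h.pos₁ t) (h.pos₂ t) (h.add_eq t)

theorem mem_Ioo₂ (h : IsReallocation B U₁ U₂ r₁ r₂) (t : ℕ) : r₂ t ∈ Ioo 0 B :=
  h.swap.mem_Ioo₁ t

theorem div_le_div_iff_le (h : IsReallocation B U₁ U₂ r₁ r₂)
    (hs : IsEqualizingAllocation B U₁ U₂ r₁s r₂s) (t : ℕ) :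
    r₁ t / r₂ t ≤ r₁s / r₂s ↔ r₁ t ≤ r₁s :=
  div_le_div_iff_le_of_add_eq (h.pos₁ t) (h.pos₂ t) hs.pos₂ (by rw [h.add_eq, hs.add_eq])

theorem div_succ_eq_mul (h : IsReallocation B U₁ U₂ r₁ r₂) (t : ℕ) :
    r₁ (t + 1) / r₂ (t + 1) = r₁ t / r₂ t * (U₂ (r₂ t) / U₁ (r₁ t)) := by
  rw [h.div_succ, div_div_div_eq, div_mul_div_comm, mul_comm (U₁ _)]

theorem div_mul_le_div_succ (h : IsReallocation B U₁ U₂ r₁ r₂)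
    (hU₁ : IsAdmissibleUtility B U₁) (hU₂ : IsAdmissibleUtility B U₂) {t : ℕ} {L : ℝ}
    (hL : L ∈ Ioo 0 B) (hle : r₁ t ≤ L) :
    r₁ t / r₂ t * (U₂ (B - L) / U₁ L) ≤ r₁ (t + 1) / r₂ (t + 1) := by
  have hBL : B - L ∈ Ioo 0 B := ⟨by linarith [hL.2], by linarith [hL.1]⟩
  have hU₂le : U₂ (B - L) ≤ U₂ (r₂ t) :=
    hU₂.strictMonoOn.monotoneOn hBL (h.mem_Ioo₂ t) (by linarith [h.add_eq t])
  have hU₁le : U₁ (r₁ t) ≤ U₁ L := hU₁.strictMonoOn.monotoneOn (h.mem_Ioo₁ t) hL hle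
  rw [h.div_succ_eq_mul]
  exact mul_le_mul_of_nonneg_left
    (div_le_div₀ (hU₂.pos _ (h.mem_Ioo₂ t)).le hU₂le (hU₁.pos _ (h.mem_Ioo₁ t)) hU₁le)
    (div_pos (h.pos₁ t) (h.pos₂ t)).le

theorem le_succ_of_le (h : IsReallocation B U₁ U₂ r₁ r₂)
    (hU₁ : IsAdmissibleUtility B U₁) (hU₂ : IsAdmissibleUtility B U₂)
    (hs : IsEqualizingAllocation B U₁ U₂ r₁s r₂s) {t : ℕ} (ht : r₁ t ≤ r₁s) :
    r₁ t ≤ r₁ (t + 1) := by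
  have hgrowth := h.div_mul_le_div_succ hU₁ hU₂ hs.mem_Ioo₁ ht
  rw [← eq_sub_of_add_eq' hs.add_eq, ← hs.utility_eq, div_self (hU₁.pos _ hs.mem_Ioo₁).ne',
    mul_one] at hgrowth
  rwa [div_le_div_iff_le_of_add_eq (h.pos₁ _) (h.pos₂ _) (h.pos₂ _)
    (by rw [h.add_eq, h.add_eq])] at hgrowth

theorem succ_le_of_le (h : IsReallocation B U₁ U₂ r₁ r₂)
    (hU₁ : IsAdmissibleUtility B U₁) (hU₂ : IsAdmissibleUtility B U₂)
    (hs : IsEqualizingAllocation B U₁ U₂ r₁s r₂s) {t : ℕ} (ht : r₁ t ≤ r₁s) :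
    r₁ (t + 1) ≤ r₁s := by
  have hr₂ : r₂s ≤ r₂ t := by linarith [h.add_eq t, hs.add_eq]
  have hs_div : r₁s / r₂s = (r₁s / U₁ r₁s) / (r₂s / U₂ r₂s) := by
    rw [hs.utility_eq, div_div_div_cancel_right₀ (hU₂.pos _ hs.mem_Ioo₂).ne']
  rw [← h.div_le_div_iff_le hs, h.div_succ, hs_div]
  exact div_le_div₀ (div_pos hs.pos₁ (hU₁.pos _ hs.mem_Ioo₁)).le
    (hU₁.monotoneOn_div (h.mem_Ioo₁ t) hs.mem_Ioo₁ ht) (div_pos hs.pos₂ (hU₂.pos _ hs.mem_Ioo₂))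
    (hU₂.monotoneOn_div hs.mem_Ioo₂ (h.mem_Ioo₂ t) hr₂)

theorem tendsto_of_le (h : IsReallocation B U₁ U₂ r₁ r₂)
    (hU₁ : IsAdmissibleUtility B U₁) (hU₂ : IsAdmissibleUtility B U₂)
    (hs : IsEqualizingAllocation B U₁ U₂ r₁s r₂s) (h₀ : r₁ 0 ≤ r₁s) :
    Tendsto r₁ atTop (𝓝 r₁s) := by
  have hbelow t : r₁ t ≤ r₁s := by
    induction t with
    | zero => exact h₀
    | succ t ih => exact h.succ_le_of_le hU₁ hU₂ hs ih
  have hmono : Monotone r₁ := monotone_nat_of_le_succ fun t => h.le_succ_of_le hU₁ hU₂ hs (hbelow t)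
  refine tendsto_atTop_isLUB hmono ⟨?_, fun L hL => ?_⟩
  · rintro _ ⟨t, rfl⟩
    exact hbelow t
  by_contra! hLlt
  have hr₁L t : r₁ t ≤ L := hL ⟨t, rfl⟩
  have hLmem : L ∈ Ioo 0 B := ⟨(h.pos₁ 0).trans_le (hr₁L 0), hLlt.trans hs.mem_Ioo₁.2⟩
  have hBL : B - L ∈ Ioo 0 B := ⟨by linarith [hLmem.2], by linarith [hLmem.1]⟩
  have hrate : 1 < U₂ (B - L) / U₁ L := by
    rw [one_lt_div (hU₁.pos _ hLmem)]
    calc U₁ L < U₁ r₁s := hU₁.strictMonoOn hLmem hs.mem_Ioo₁ hLlt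
      _ = U₂ r₂s := hs.utility_eq
      _ < U₂ (B - L) := hU₂.strictMonoOn hs.mem_Ioo₂ hBL (by linarith [hs.add_eq])
  refine not_bddAbove_range_of_mul_le (q := fun t => r₁ t / r₂ t)
    (div_pos (h.pos₁ 0) (h.pos₂ 0)) hrate (fun t => h.div_mul_le_div_succ hU₁ hU₂ hLmem (hr₁L t))
    ⟨r₁s / r₂s, ?_⟩
  rintro _ ⟨t, rfl⟩
  exact (h.div_le_div_iff_le hs t).2 (hbelow t)

theorem tendsto (h : IsReallocation B U₁ U₂ r₁ r₂)
    (hU₁ : IsAdmissibleUtility B U₁) (hU₂ : IsAdmissibleUtility B U₂)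
    (hs : IsEqualizingAllocation B U₁ U₂ r₁s r₂s) :
    Tendsto r₁ atTop (𝓝 r₁s) ∧ Tendsto r₂ atTop (𝓝 r₂s) := by
  rcases le_total (r₁ 0) r₁s with h₀ | h₀
  · have h₁ := h.tendsto_of_le hU₁ hU₂ hs h₀
    exact ⟨h₁, h₁.of_add_eq h.add_eq hs.add_eq⟩
  · have h₂ := h.swap.tendsto_of_le hU₂ hU₁ hs.swap (by linarith [h.add_eq 0, hs.add_eq])
    exact ⟨h₂.of_add_eq h.swap.add_eq hs.swap.add_eq, h₂⟩

end IsReallocation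

theorem allocation_convergence_general
    (α B : ℝ) (hα : α ∈ Ioo (0:ℝ) 1) (hB : 0 < B)
    (U₁ U₂ : ℝ → ℝ)
    (hU₁pos : ∀ r ∈ Ioo (0:ℝ) B, 0 < U₁ r)
    (hU₂pos : ∀ r ∈ Ioo (0:ℝ) B, 0 < U₂ r)
    (hU₁ratio : ∀ x y : ℝ, 0 < x → x ≤ y → y < B →
      (y / x) ^ α ≤ U₁ y / U₁ x ∧ U₁ y / U₁ x ≤ y / x)
    (hU₂ratio : ∀ x y : ℝ, 0 < x → x ≤ y → y < B →
      (y / x) ^ α ≤ U₂ y / U₂ x ∧ U₂ y / U₂ x ≤ y / x)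
    (r₁s r₂s : ℝ) (hr₁s : 0 < r₁s) (hr₂s : 0 < r₂s) (hsums : r₁s + r₂s = B)
    (heq : U₁ r₁s = U₂ r₂s)
    (r₁ r₂ : ℕ → ℝ)
    (hpos₁ : ∀ t, 0 < r₁ t) (hpos₂ : ∀ t, 0 < r₂ t)
    (hsum : ∀ t, r₁ t + r₂ t = B)
    (hupd₁ : ∀ t, r₁ (t + 1) =
      (r₁ t / U₁ (r₁ t)) * B / (r₁ t / U₁ (r₁ t) + r₂ t / U₂ (r₂ t)))
    (hupd₂ : ∀ t, r₂ (t + 1) =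
      (r₂ t / U₂ (r₂ t)) * B / (r₁ t / U₁ (r₁ t) + r₂ t / U₂ (r₂ t))) :
    Tendsto r₁ atTop (nhds r₁s) ∧ Tendsto r₂ atTop (nhds r₂s) := by
  have hU₁ := IsAdmissibleUtility.of_rpow_le_div_le hα.1 hU₁pos hU₁ratio
  have hU₂ := IsAdmissibleUtility.of_rpow_le_div_le hα.1 hU₂pos hU₂ratio
  have hweight₁ t : 0 < r₁ t / U₁ (r₁ t) :=
    div_pos (hpos₁ t) (hU₁.pos _ (mem_Ioo_of_add_eq (hpos₁ t) (hpos₂ t) (hsum t)))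
  have hweight₂ t : 0 < r₂ t / U₂ (r₂ t) :=
    div_pos (hpos₂ t) (hU₂.pos _ (mem_Ioo_of_add_eq (hpos₂ t) (hpos₁ t) (by rw [add_comm, hsum])))
  have hr : IsReallocation B U₁ U₂ r₁ r₂ := ⟨hpos₁, hpos₂, hsum, fun t => by
    rw [hupd₁, hupd₂, div_div_div_cancel_right₀ (add_pos (hweight₁ t) (hweight₂ t)).ne',
      mul_div_mul_right _ _ hB.ne']⟩
  exact hr.tendsto hU₁ hU₂ ⟨hr₁s, hr₂s, hsums, heq⟩

theorem allocation_convergence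
    (α B : ℝ) (hα : α ∈ Ioo (0:ℝ) 1) (hB : 0 < B)
    (U₁ U₂ : ℝ → ℝ)
    (hc₁ : ContinuousOn U₁ (Ioo 0 B)) (hc₂ : ContinuousOn U₂ (Ioo 0 B))
    (hU₁pos : ∀ r ∈ Ioo (0:ℝ) B, 0 < U₁ r)
    (hU₂pos : ∀ r ∈ Ioo (0:ℝ) B, 0 < U₂ r)
    (hU₁ratio : ∀ x y : ℝ, 0 < x → x ≤ y → y < B →
      (y / x) ^ α ≤ U₁ y / U₁ x ∧ U₁ y / U₁ x ≤ y / x)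
    (hU₂ratio : ∀ x y : ℝ, 0 < x → x ≤ y → y < B →
      (y / x) ^ α ≤ U₂ y / U₂ x ∧ U₂ y / U₂ x ≤ y / x)
    (r₁s r₂s : ℝ) (hr₁s : 0 < r₁s) (hr₂s : 0 < r₂s) (hsums : r₁s + r₂s = B)
    (heq : U₁ r₁s = U₂ r₂s)
    (r₁ r₂ : ℕ → ℝ)
    (hpos₁ : ∀ t, 0 < r₁ t) (hpos₂ : ∀ t, 0 < r₂ t)
    (hsum : ∀ t, r₁ t + r₂ t = B)
    (hupd₁ : ∀ t, r₁ (t + 1) =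
      (r₁ t / U₁ (r₁ t)) * B / (r₁ t / U₁ (r₁ t) + r₂ t / U₂ (r₂ t)))
    (hupd₂ : ∀ t, r₂ (t + 1) =
      (r₂ t / U₂ (r₂ t)) * B / (r₁ t / U₁ (r₁ t) + r₂ t / U₂ (r₂ t))) :
    Tendsto r₁ atTop (nhds r₁s) ∧ Tendsto r₂ atTop (nhds r₂s) :=
  allocation_convergence_general α B hα hB U₁ U₂ hU₁pos hU₂pos hU₁ratio hU₂ratio r₁s r₂s hr₁s hr₂s
    hsums heq r₁ r₂ hpos₁ hpos₂ hsum hupd₁ hupd₂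
end

section
/- With ρ^t = r₂^t/r₁^t and the update ρ^{t+1} = (U₁(r₁^t)/U₂(r₂^t))·ρ^t, where r₁^t = B/(1+ρ^t) and r₂^t = Bρ^t/(1+ρ^t), if U₁ and U₂ satisfy (y/x)^α ≤ U_i(y)/U_i(x) ≤ y/x and ρ* is the ratio at the equalizing allocation, then |log(ρ^{t+1}/ρ*)| ≤ (1−α)·|log(ρ^t/ρ*)| whenever the deviations X₁^t = r₁*/r₁^t and X₂^t = r₂^t/r₂* are both ≥ 1 or both ≤ 1. -/
open Set

set_option maxHeartbeats 1000000 in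
theorem log_ratio_contraction
    (α B : ℝ) (hα : α ∈ Ioo (0:ℝ) 1) (hB : 0 < B)
    (U₁ U₂ : ℝ → ℝ)
    (hU₁pos : ∀ r ∈ Ioo (0:ℝ) B, 0 < U₁ r)
    (hU₂pos : ∀ r ∈ Ioo (0:ℝ) B, 0 < U₂ r)
    (hU₁ratio : ∀ x y : ℝ, 0 < x → x ≤ y → y < B →
      (y / x) ^ α ≤ U₁ y / U₁ x ∧ U₁ y / U₁ x ≤ y / x)
    (hU₂ratio : ∀ x y : ℝ, 0 < x → x ≤ y → y < B →
      (y / x) ^ α ≤ U₂ y / U₂ x ∧ U₂ y / U₂ x ≤ y / x)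
    (r₁s r₂s : ℝ) (hr₁s : 0 < r₁s) (hr₂s : 0 < r₂s) (hsums : r₁s + r₂s = B)
    (heq : U₁ r₁s = U₂ r₂s)
    (ρs : ℝ) (hρs : ρs = r₂s / r₁s)
    (ρ : ℝ) (hρ : 0 < ρ)
    (r₁t r₂t : ℝ)
    (hr₁t : r₁t = B / (1 + ρ)) (hr₂t : r₂t = B * ρ / (1 + ρ))
    (ρnext : ℝ) (hρnext : ρnext = (U₁ r₁t / U₂ r₂t) * ρ)
    (hsign : (1 ≤ r₁s / r₁t ∧ 1 ≤ r₂t / r₂s) ∨ (r₁s / r₁t ≤ 1 ∧ r₂t / r₂s ≤ 1)) :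
    |Real.log (ρnext / ρs)| ≤ (1 - α) * |Real.log (ρ / ρs)| := by
  obtain ⟨hα0, hα1⟩ := hα
  have h1ρ : (0:ℝ) < 1 + ρ := by linarith
  have hr₁tpos : 0 < r₁t := by rw [hr₁t]; positivity
  have hr₂tpos : 0 < r₂t := by rw [hr₂t]; positivity
  have hr₁tlt : r₁t < B := by rw [hr₁t, div_lt_iff₀ h1ρ]; nlinarith
  have hr₂tlt : r₂t < B := by rw [hr₂t, div_lt_iff₀ h1ρ]; nlinarith
  have hr₁slt : r₁s < B := by linarith
  have hr₂slt : r₂s < B := by linarith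
  have hU1t : 0 < U₁ r₁t := hU₁pos _ ⟨hr₁tpos, hr₁tlt⟩
  have hU1s : 0 < U₁ r₁s := hU₁pos _ ⟨hr₁s, hr₁slt⟩
  have hU2t : 0 < U₂ r₂t := hU₂pos _ ⟨hr₂tpos, hr₂tlt⟩
  have hU2s : 0 < U₂ r₂s := hU₂pos _ ⟨hr₂s, hr₂slt⟩
  have hρspos : 0 < ρs := by rw [hρs]; positivity
  have hrat : r₂t / r₁t = ρ := by
    rw [hr₁t, hr₂t]; field_simp
  -- log abbreviations
  set a := Real.log r₁s with ha
  set b := Real.log r₁t with hb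
  set c := Real.log r₂t with hc
  set d := Real.log r₂s with hd
  set p := Real.log (U₁ r₁s) with hp
  set q := Real.log (U₁ r₁t) with hq
  set u := Real.log (U₂ r₂t) with hu
  set v := Real.log (U₂ r₂s) with hv
  have hpv : p = v := by rw [hp, hv, heq]
  have hlogρ : Real.log (ρ / ρs) = (a - b) + (c - d) := by
    rw [← hrat, hρs, Real.log_div (by positivity) (by positivity),
      Real.log_div hr₂tpos.ne' hr₁tpos.ne', Real.log_div hr₂s.ne' hr₁s.ne']
    ring
  have hlognext : Real.log (ρnext / ρs) = ((a - b) + (c - d)) - ((p - q) + (u - v)) := by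
    have : ρnext / ρs = (U₁ r₁t / U₂ r₂t) * (ρ / ρs) := by
      rw [hρnext]; ring
    rw [this, Real.log_mul (by positivity) (by positivity),
      Real.log_div hU1t.ne' hU2t.ne', hlogρ, hpv]
    ring
  -- bounds from the ratio hypotheses
  rcases hsign with ⟨h1, h2⟩ | ⟨h1, h2⟩
  · have hle1 : r₁t ≤ r₁s := (one_le_div hr₁tpos).mp h1
    have hle2 : r₂s ≤ r₂t := (one_le_div hr₂s).mp h2
    obtain ⟨hl₁, hu₁⟩ := hU₁ratio r₁t r₁s hr₁tpos hle1 hr₁slt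
    obtain ⟨hl₂, hu₂⟩ := hU₂ratio r₂s r₂t hr₂s hle2 hr₂tlt
    have hX₁ : (0:ℝ) < r₁s / r₁t := by positivity
    have hX₂ : (0:ℝ) < r₂t / r₂s := by positivity
    have hm₁ : α * (a - b) ≤ p - q := by
      have := Real.log_le_log (by positivity) hl₁
      rwa [Real.log_rpow hX₁, Real.log_div hr₁s.ne' hr₁tpos.ne',
        Real.log_div hU1s.ne' hU1t.ne'] at this
    have hM₁ : p - q ≤ a - b := by
      have := Real.log_le_log (by positivity) hu₁
      rwa [Real.log_div hr₁s.ne' hr₁tpos.ne',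
        Real.log_div hU1s.ne' hU1t.ne'] at this
    have hm₂ : α * (c - d) ≤ u - v := by
      have := Real.log_le_log (by positivity) hl₂
      rwa [Real.log_rpow hX₂, Real.log_div hr₂tpos.ne' hr₂s.ne',
        Real.log_div hU2t.ne' hU2s.ne'] at this
    have hM₂ : u - v ≤ c - d := by
      have := Real.log_le_log (by positivity) hu₂
      rwa [Real.log_div hr₂tpos.ne' hr₂s.ne',
        Real.log_div hU2t.ne' hU2s.ne'] at this
    have hL₁ : 0 ≤ a - b := by
      have := Real.log_le_log hr₁tpos hle1; linarith
    have hL₂ : 0 ≤ c - d := by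
      have := Real.log_le_log hr₂s hle2; linarith
    rw [hlognext, hlogρ, abs_of_nonneg (by linarith), abs_of_nonneg (by linarith)]
    linarith
  · have hle1 : r₁s ≤ r₁t := by
      rw [div_le_one hr₁tpos] at h1; exact h1
    have hle2 : r₂t ≤ r₂s := by
      rw [div_le_one hr₂s] at h2; exact h2
    obtain ⟨hl₁, hu₁⟩ := hU₁ratio r₁s r₁t hr₁s hle1 hr₁tlt
    obtain ⟨hl₂, hu₂⟩ := hU₂ratio r₂t r₂s hr₂tpos hle2 hr₂slt
    have hX₁ : (0:ℝ) < r₁t / r₁s := by positivity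
    have hX₂ : (0:ℝ) < r₂s / r₂t := by positivity
    have hm₁ : α * (b - a) ≤ q - p := by
      have := Real.log_le_log (by positivity) hl₁
      rwa [Real.log_rpow hX₁, Real.log_div hr₁tpos.ne' hr₁s.ne',
        Real.log_div hU1t.ne' hU1s.ne'] at this
    have hM₁ : q - p ≤ b - a := by
      have := Real.log_le_log (by positivity) hu₁
      rwa [Real.log_div hr₁tpos.ne' hr₁s.ne',
        Real.log_div hU1t.ne' hU1s.ne'] at this
    have hm₂ : α * (d - c) ≤ v - u := by
      have := Real.log_le_log (by positivity) hl₂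
      rwa [Real.log_rpow hX₂, Real.log_div hr₂s.ne' hr₂tpos.ne',
        Real.log_div hU2s.ne' hU2t.ne'] at this
    have hM₂ : v - u ≤ d - c := by
      have := Real.log_le_log (by positivity) hu₂
      rwa [Real.log_div hr₂s.ne' hr₂tpos.ne',
        Real.log_div hU2s.ne' hU2t.ne'] at this
    have hL₁ : a - b ≤ 0 := by
      have := Real.log_le_log hr₁s hle1; linarith
    have hL₂ : c - d ≤ 0 := by
      have := Real.log_le_log hr₂tpos hle2; linarith
    rw [hlognext, hlogρ, abs_of_nonpos (by linarith), abs_of_nonpos (by linarith)]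
    linarith
end
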